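/- Let D be a strongly connected digraph of girth 4, |V(D)| ≥ 6, containing the 4-cycles (u,v,w,z,u) and (u,v,w,x,u) where x→z ∈ A(D), d⁺(z) = 1, d⁻(z) = 2, and suppose there exists a vertex a₁ ∉ {u,v,w,x,z} with w→a₁ ∈ A(D) and a₁→u ∈ A(D). Then D is λ'-connected and λ'(D) ≤ d⁺(u)+d⁺(v)+d⁺(w)+d⁺(z) − 4. -/

import Mathlib

/-- A digraph on vertex type `V`, given by its adjacency (arc) relation. -/
structure Digr (V : Type) where
  Adj : V → V → Prop

namespace Digr

variable {V : Type}

/-- Reachability by directed paths. -/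
def Reach (D : Digr V) : V → V → Prop := Relation.ReflTransGen D.Adj

/-- A digraph is strongly connected if every vertex reaches every other. -/
def StronglyConnected (D : Digr V) : Prop := ∀ u v : V, D.Reach u v

/-- An oriented graph: no loops and no pair of opposite arcs. -/
def Oriented (D : Digr V) : Prop := ∀ u v : V, D.Adj u v → ¬ D.Adj v u

/-- The digraph contains at least one arc. -/
def HasArc (D : Digr V) : Prop := ∃ u v : V, D.Adj u v

/-- Delete a set of arcs. -/
def delArcs (D : Digr V) (S : Set (V × V)) : Digr V :=
  ⟨fun a b => D.Adj a b ∧ (a, b) ∉ S⟩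

/-- Delete a set of vertices (keep arcs avoiding them). -/
def delVerts (D : Digr V) (X : Set V) : Digr V :=
  ⟨fun a b => D.Adj a b ∧ a ∉ X ∧ b ∉ X⟩

/-- Induced subdigraph on a vertex set. -/
def induce (D : Digr V) (X : Set V) : Digr V :=
  ⟨fun a b => a ∈ X ∧ b ∈ X ∧ D.Adj a b⟩

/-- The induced subdigraph on `X` is strongly connected. -/
def StronglyConnectedOn (D : Digr V) (X : Set V) : Prop :=
  ∀ u ∈ X, ∀ v ∈ X, (D.induce X).Reach u v

/-- Mutual reachability. -/
def MReach (D : Digr V) (u v : V) : Prop := D.Reach u v ∧ D.Reach v u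

/-- `X` is a strong component: an equivalence class of mutual reachability. -/
def IsStrongComponent (D : Digr V) (X : Set V) : Prop :=
  ∃ x : V, X = {y | D.MReach x y}

/-- `S` is a restricted arc-cut: a set of arcs whose deletion leaves a
non-trivial strong component `X` (containing an arc) such that deleting the
vertices of `X` from `D` leaves an arc. -/
def IsRestrictedArcCut (D : Digr V) (S : Set (V × V)) : Prop :=
  (∀ p ∈ S, D.Adj p.1 p.2) ∧
  ∃ X : Set V, (D.delArcs S).IsStrongComponent X ∧
    (∃ u ∈ X, ∃ v ∈ X, (D.delArcs S).Adj u v) ∧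
    (D.delVerts X).HasArc

/-- A digraph is λ'-connected if it admits a restricted arc-cut. -/
def LambdaPrimeConnected (D : Digr V) : Prop :=
  ∃ S : Set (V × V), D.IsRestrictedArcCut S

/-- λ'(D): minimum size of a restricted arc-cut. -/
noncomputable def lambdaPrime (D : Digr V) [Fintype V] : ℕ :=
  sInf {n : ℕ | ∃ S : Finset (V × V), D.IsRestrictedArcCut ↑S ∧ S.card = n}

/-- λ(D): the arc-connectivity, the minimum size of an arc set whose removal
destroys strong connectivity. -/
noncomputable def lambda (D : Digr V) [Fintype V] : ℕ :=
  sInf {n : ℕ | ∃ S : Finset (V × V), (∀ p ∈ S, D.Adj p.1 p.2) ∧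
    ¬ (D.delArcs ↑S).StronglyConnected ∧ S.card = n}

/-- The list `l` of distinct vertices forms a directed cycle. -/
def IsCycleList (D : Digr V) (l : List V) : Prop :=
  ∃ h : l ≠ [], l.Nodup ∧ l.Chain' D.Adj ∧ D.Adj (l.getLast h) (l.head h)

/-- The girth: minimum length of a directed cycle. -/
noncomputable def girth (D : Digr V) : ℕ :=
  sInf {n : ℕ | ∃ l : List V, D.IsCycleList l ∧ l.length = n}

/-- `(u,v,w,z,u)` is a 4-cycle of `D`. -/
def Cycle4 (D : Digr V) (u v w z : V) : Prop := D.IsCycleList [u, v, w, z]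

/-- Out-degree. -/
def outDeg (D : Digr V) [Fintype V] [DecidableRel D.Adj] (v : V) : ℕ :=
  (Finset.univ.filter fun w => D.Adj v w).card

/-- In-degree. -/
def inDeg (D : Digr V) [Fintype V] [DecidableRel D.Adj] (v : V) : ℕ :=
  (Finset.univ.filter fun w => D.Adj w v).card

/-- ξ(D): minimum over girth cycles `C` of
`min (Σ d⁺ − g, Σ d⁻ − g)`. -/
noncomputable def xi (D : Digr V) [Fintype V] [DecidableRel D.Adj] : ℤ :=
  sInf {k : ℤ | ∃ l : List V, D.IsCycleList l ∧ l.length = D.girth ∧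
    k = min (((l.map D.outDeg).sum : ℤ) - (D.girth : ℤ))
            (((l.map D.inDeg).sum : ℤ) - (D.girth : ℤ))}

/-- ∂⁺(X): the set of arcs from `X` to its complement. -/
noncomputable def outBoundary (D : Digr V) [Fintype V] (X : Set V) : Finset (V × V) :=
  (Set.toFinite {p : V × V | p.1 ∈ X ∧ p.2 ∉ X ∧ D.Adj p.1 p.2}).toFinset

/-- ∂⁻(X): the set of arcs from the complement of `X` into `X`. -/
noncomputable def inBoundary (D : Digr V) [Fintype V] (X : Set V) : Finset (V × V) :=
  (Set.toFinite {p : V × V | p.1 ∉ X ∧ p.2 ∈ X ∧ D.Adj p.1 p.2}).toFinset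

/-- The list of arcs of a cycle given as a vertex list. -/
def cycleArcs (l : List V) : List (V × V) := l.zip (l.rotate 1)

end Digr

/-! The out-boundary `∂⁺X` of the vertex set `X` of a 4-cycle is a restricted arc-cut as soon as
some arc avoids `X`, and `|∂⁺X| = Σ_{s ∈ X} d⁺(s) − #(arcs inside X) ≤ Σ_{s ∈ X} d⁺(s) − 4`.
If `a₁` has an out-neighbour `t ≠ u`, then `t` avoids the cycle `(u,v,w,z)`: `t = v` closes a
triangle, `t = w` a digon, and `t = z` gives `d⁻(z) ≥ 3`. Otherwise `d⁺(a₁) = 1 = d⁺(z)` and the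
cycle `(u,v,w,a₁)` together with the arc `x → z` does the job. -/

namespace Digr

variable {V : Type} (D : Digr V)

theorem cycle4_iff {a b c d : V} :
    D.Cycle4 a b c d ↔
      [a, b, c, d].Nodup ∧ D.Adj a b ∧ D.Adj b c ∧ D.Adj c d ∧ D.Adj d a := by
  simp [Cycle4, IsCycleList, List.Chain', and_assoc]

theorem Oriented.ne_of_adj {D : Digr V} (hO : D.Oriented) {a b : V} (h : D.Adj a b) :
    a ≠ b := by
  rintro rfl
  exact hO a a h h

theorem Oriented.not_adj_of_three_lt_girth {D : Digr V} (hO : D.Oriented)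
    (hg : 3 < D.girth) {a b c : V} (hab : D.Adj a b) (hbc : D.Adj b c) : ¬D.Adj c a := by
  intro hca
  have hcyc : D.IsCycleList [a, b, c] := by
    refine ⟨List.cons_ne_nil _ _, ?_, by simp [List.Chain', hab, hbc], hca⟩
    simp [hO.ne_of_adj hab, hO.ne_of_adj hbc, (hO.ne_of_adj hca).symm]
  exact hg.not_ge (Nat.sInf_le ⟨_, hcyc, rfl⟩)

theorem card_le_inDeg [Fintype V] [DecidableRel D.Adj] {s : Finset V} {v : V}
    (h : ∀ y ∈ s, D.Adj y v) : s.card ≤ D.inDeg v :=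
  Finset.card_le_card fun y hy => Finset.mem_filter.2 ⟨Finset.mem_univ y, h y hy⟩

theorem outDeg_le_one [Fintype V] [DecidableRel D.Adj] {a u : V}
    (h : ∀ t, D.Adj a t → t = u) : D.outDeg a ≤ 1 :=
  Finset.card_le_one.2 fun s hs t ht => by
    simp only [Finset.mem_filter, Finset.mem_univ, true_and] at hs ht
    rw [h s hs, h t ht]

section OutBoundary

variable [Fintype V]

theorem mem_outBoundary {X : Set V} {p : V × V} :
    p ∈ D.outBoundary X ↔ p.1 ∈ X ∧ p.2 ∉ X ∧ D.Adj p.1 p.2 :=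
  Set.Finite.mem_toFinset _

theorem delArcs_outBoundary_adj {X : Set V} {s t : V} (h : D.Adj s t) (ht : t ∈ X) :
    (D.delArcs (D.outBoundary X)).Adj s t :=
  ⟨h, fun hst => (D.mem_outBoundary.1 hst).2.1 ht⟩

theorem mem_of_delArcs_outBoundary_reach {X : Set V} {a y : V} (ha : a ∈ X)
    (h : (D.delArcs (D.outBoundary X)).Reach a y) : y ∈ X := by
  induction h with
  | refl => exact ha
  | tail _ hst ih =>
    by_contra hy
    exact hst.2 (D.mem_outBoundary.2 ⟨ih, hy, hst.1⟩)

theorem isRestrictedArcCut_outBoundary {X : Set V} (hX : D.StronglyConnectedOn X)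
    {a b p q : V} (ha : a ∈ X) (hb : b ∈ X) (hab : D.Adj a b)
    (hpq : D.Adj p q) (hp : p ∉ X) (hq : q ∉ X) :
    D.IsRestrictedArcCut (D.outBoundary X) := by
  have lift : ∀ {s t : V}, (D.induce X).Reach s t → (D.delArcs (D.outBoundary X)).Reach s t :=
    fun h => Relation.ReflTransGen.mono
      (fun _ _ (hst : (D.induce X).Adj _ _) => D.delArcs_outBoundary_adj hst.2.2 hst.2.1) _ _ h
  have hcomp : X = {y | (D.delArcs (D.outBoundary X)).MReach a y} := by
    ext y
    exact ⟨fun hy => ⟨lift (hX a ha y hy), lift (hX y hy a ha)⟩,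
      fun hy => D.mem_of_delArcs_outBoundary_reach ha hy.1⟩
  exact ⟨fun r hr => (D.mem_outBoundary.1 hr).2.2, X, ⟨a, hcomp⟩,
    ⟨a, ha, b, hb, D.delArcs_outBoundary_adj hab hb⟩, ⟨p, q, hpq, hp, hq⟩⟩

theorem lambdaPrime_le_card {S : Finset (V × V)} (hS : D.IsRestrictedArcCut S) :
    D.lambdaPrime ≤ S.card :=
  Nat.sInf_le ⟨S, hS, rfl⟩

theorem card_outBoundary_add_card_arcs [DecidableRel D.Adj] [DecidableEq V] (X : Finset V) :
    (D.outBoundary X).card + ((X ×ˢ X).filter fun p => D.Adj p.1 p.2).card =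
      ∑ s ∈ X, D.outDeg s := by
  have hsum : ∑ s ∈ X, D.outDeg s = ((X ×ˢ Finset.univ).filter fun p => D.Adj p.1 p.2).card := by
    simp only [outDeg, Finset.card_filter, Finset.sum_product]
  rw [hsum, ← Finset.card_filter_add_card_filter_not (s := (X ×ˢ Finset.univ).filter _)
    (fun p : V × V => p.2 ∉ X)]
  congr 2 <;> ext p <;> simp [mem_outBoundary, and_assoc, and_comm, and_left_comm]

end OutBoundary

namespace Cycle4

variable {D} {a b c d : V}

theorem stronglyConnectedOn (h : D.Cycle4 a b c d) : D.StronglyConnectedOn {a, b, c, d} := by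
  obtain ⟨-, hab, hbc, hcd, hda⟩ := D.cycle4_iff.1 h
  set X : Set V := {a, b, c, d}
  have arc : ∀ {s t : V}, D.Adj s t → s ∈ X → t ∈ X → (D.induce X).Reach s t :=
    fun hst hs ht => .single ⟨hs, ht, hst⟩
  have rab := arc hab (by simp [X]) (by simp [X])
  have rbc := arc hbc (by simp [X]) (by simp [X])
  have rcd := arc hcd (by simp [X]) (by simp [X])
  have rda := arc hda (by simp [X]) (by simp [X])
  have from_a : ∀ y ∈ X, (D.induce X).Reach a y := by
    rintro y (rfl | rfl | rfl | rfl)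
    exacts [.refl, rab, rab.trans rbc, (rab.trans rbc).trans rcd]
  have to_a : ∀ y ∈ X, (D.induce X).Reach y a := by
    rintro y (rfl | rfl | rfl | rfl)
    exacts [.refl, (rbc.trans rcd).trans rda, rcd.trans rda, rda]
  exact fun s hs t ht => (to_a s hs).trans (from_a t ht)

theorem four_le_card_arcs [DecidableEq V] [DecidableRel D.Adj] (h : D.Cycle4 a b c d) :
    4 ≤ (({a, b, c, d} ×ˢ {a, b, c, d} : Finset (V × V)).filter
      fun p => D.Adj p.1 p.2).card := by
  obtain ⟨hnd, hab, hbc, hcd, hda⟩ := D.cycle4_iff.1 h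
  have hnd' : [(a, b), (b, c), (c, d), (d, a)].Nodup := List.Nodup.of_map Prod.fst hnd
  calc 4 = [(a, b), (b, c), (c, d), (d, a)].toFinset.card := (List.toFinset_card_of_nodup hnd').symm
    _ ≤ _ := Finset.card_le_card fun p hp => by
      simp only [List.mem_toFinset, List.mem_cons, List.not_mem_nil, or_false] at hp
      rcases hp with rfl | rfl | rfl | rfl <;> simp [*]

theorem lambdaPrimeConnected_and_lambdaPrime_add_four_le [Fintype V] [DecidableRel D.Adj]
    {p q : V} (h : D.Cycle4 a b c d) (hpq : D.Adj p q) (hp : p ∉ ({a, b, c, d} : Set V))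
    (hq : q ∉ ({a, b, c, d} : Set V)) :
    D.LambdaPrimeConnected ∧
      D.lambdaPrime + 4 ≤ D.outDeg a + D.outDeg b + D.outDeg c + D.outDeg d := by
  classical
  obtain ⟨hnd, hab, -, -, -⟩ := D.cycle4_iff.1 h
  have hcut : D.IsRestrictedArcCut (D.outBoundary {a, b, c, d}) :=
    D.isRestrictedArcCut_outBoundary h.stronglyConnectedOn (by simp) (by simp) hab hpq hp hq
  refine ⟨⟨_, hcut⟩, ?_⟩
  have hcount := D.card_outBoundary_add_card_arcs {a, b, c, d}
  simp only [List.nodup_cons, List.mem_cons, List.not_mem_nil, or_false, not_or] at hnd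
  rw [Finset.sum_insert (by simp [*]), Finset.sum_insert (by simp [*]),
    Finset.sum_insert (by simp [*]), Finset.sum_singleton] at hcount
  push_cast at hcount
  have hlam := D.lambdaPrime_le_card hcut
  have hinner := h.four_le_card_arcs
  omega

end Cycle4

end Digr

theorem stmt16_general {V : Type} [Fintype V] (D : Digr V) [DecidableRel D.Adj]
    (hO : D.Oriented) (hg : D.girth = 4)
    (u v w z x a₁ : V) (hC : D.Cycle4 u v w z) (hC' : D.Cycle4 u v w x)
    (hxz : D.Adj x z) (hz1 : D.outDeg z = 1) (hz2 : D.inDeg z = 2)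
    (ha : a₁ ∉ ({u, v, w, x, z} : Set V))
    (hwa : D.Adj w a₁) (hau : D.Adj a₁ u) :
    D.LambdaPrimeConnected ∧
      (D.lambdaPrime : ℤ) ≤
        (D.outDeg u + D.outDeg v + D.outDeg w + D.outDeg z : ℤ) - 4 := by
  classical
  obtain ⟨hnd, huv, hvw, hwz, -⟩ := D.cycle4_iff.1 hC
  obtain ⟨hnd', -, -, hwx, -⟩ := D.cycle4_iff.1 hC'
  simp only [List.nodup_cons, List.mem_cons, List.not_mem_nil, or_false, not_or] at hnd hnd'
  simp only [Set.mem_insert_iff, Set.mem_singleton_iff, not_or] at ha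
  by_cases hout : ∀ t, D.Adj a₁ t → t = u
  · have ha₁ := D.outDeg_le_one hout
    have hC₁ : D.Cycle4 u v w a₁ := D.cycle4_iff.2 ⟨by simp [*, Ne.symm], huv, hvw, hwa, hau⟩
    obtain ⟨hconn, hle⟩ := hC₁.lambdaPrimeConnected_and_lambdaPrime_add_four_le hxz
      (by simp [*, Ne.symm]) (by simp [*, Ne.symm])
    exact ⟨hconn, by omega⟩
  · push Not at hout
    obtain ⟨t, hat, htu⟩ := hout
    have htv : t ≠ v := by
      rintro rfl
      exact hO.not_adj_of_three_lt_girth (by omega) hvw hwa hat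
    have htw : t ≠ w := by
      rintro rfl
      exact hO _ _ hwa hat
    have htz : t ≠ z := by
      rintro rfl
      have hz3 := D.card_le_inDeg (s := {w, x, a₁}) (v := t) (by simp [hwz, hxz, hat])
      rw [Finset.card_insert_of_notMem (by simp [*, Ne.symm]),
        Finset.card_pair (Ne.symm ha.2.2.2.1)] at hz3
      omega
    obtain ⟨hconn, hle⟩ := hC.lambdaPrimeConnected_and_lambdaPrime_add_four_le hat
      (by simp [*, Ne.symm]) (by simp [*])
    exact ⟨hconn, by omega⟩

/-- Subcase 3.1 step: with `x→z`, `d⁺(z)=1`, `d⁻(z)=2` and a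
vertex `a₁` with `w→a₁→u`, `D` is λ'-connected and
`λ'(D) ≤ d⁺u+d⁺v+d⁺w+d⁺z−4`. -/
theorem stmt16 {V : Type} [Fintype V] (D : Digr V) [DecidableRel D.Adj]
    (hO : D.Oriented) (hS : D.StronglyConnected) (hg : D.girth = 4)
    (hcard : 6 ≤ Fintype.card V)
    (u v w z x a₁ : V) (hC : D.Cycle4 u v w z) (hC' : D.Cycle4 u v w x)
    (hxz : D.Adj x z) (hz1 : D.outDeg z = 1) (hz2 : D.inDeg z = 2)
    (ha : a₁ ∉ ({u, v, w, x, z} : Set V))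
    (hwa : D.Adj w a₁) (hau : D.Adj a₁ u) :
    D.LambdaPrimeConnected ∧
      (D.lambdaPrime : ℤ) ≤
        (D.outDeg u + D.outDeg v + D.outDeg w + D.outDeg z : ℤ) - 4 :=
  stmt16_general D hO hg u v w z x a₁ hC hC' hxz hz1 hz2 ha hwa hau
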